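/- Sufficient optimality condition with congestion control (Theorem 5): In the service-chain model with the congestion-control extension, let r be an admitted rate, (φ,t) feasible for r, and λ a marginal vector for (φ,t) satisfying the sufficient-optimality condition. Suppose in addition that for every i ∈ V and a ∈ A with r̄_i(a) > 0: if r_i(a) > 0 then λ_i(a,0) ≤ U'_{ia}(r_i(a)), and if r_i(a) < r̄_i(a) then λ_i(a,0) ≥ U'_{ia}(r_i(a)). Then (r,φ,t) maximizes the utility-minus-cost: W(r,φ,t) ≥ W(r′,φ′,t′) for every admitted rate r′ and every pair (φ′,t′) feasible for r′. -/

import Mathlib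

open scoped BigOperators
open Classical

/-- The service-chain network model: a finite directed graph, a finite set of
applications, each with a chain length, a destination, packet sizes and computation
weights, together with nondecreasing convex continuously differentiable link and
computation cost functions (with their derivatives). -/
structure SCNet (V A : Type) [Fintype V] [DecidableEq V] [Fintype A] where
  /-- the edge relation -/
  E : V → V → Prop
  /-- chain length of each application -/
  K : A → ℕ
  /-- destination of each application -/
  dest : A → V
  /-- packet size of each stage -/
  L : A → ℕ → ℝ
  hL : ∀ a k, k ≤ K a → 0 < L a k
  /-- computation weights -/
  w : V → A → ℕ → ℝ
  hw : ∀ i a k, k ≤ K a → 0 < w i a k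
  /-- link cost functions -/
  D : V → V → ℝ → ℝ
  /-- derivative of the link cost functions -/
  D' : V → V → ℝ → ℝ
  /-- computation cost functions -/
  C : V → ℝ → ℝ
  /-- derivative of the computation cost functions -/
  C' : V → ℝ → ℝ
  hD_mono : ∀ i j, E i j → MonotoneOn (D i j) (Set.Ici 0)
  hD_conv : ∀ i j, E i j → ConvexOn ℝ (Set.Ici 0) (D i j)
  hD_deriv : ∀ i j, E i j → ∀ x ∈ Set.Ici (0 : ℝ),
    HasDerivWithinAt (D i j) (D' i j x) (Set.Ici 0) x
  hD'_cont : ∀ i j, E i j → ContinuousOn (D' i j) (Set.Ici 0)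
  hC_mono : ∀ i, MonotoneOn (C i) (Set.Ici 0)
  hC_conv : ∀ i, ConvexOn ℝ (Set.Ici 0) (C i)
  hC_deriv : ∀ i, ∀ x ∈ Set.Ici (0 : ℝ),
    HasDerivWithinAt (C i) (C' i x) (Set.Ici 0) x
  hC'_cont : ∀ i, ContinuousOn (C' i) (Set.Ici 0)

variable {V A : Type} [Fintype V] [DecidableEq V] [Fintype A]

/-- A forwarding strategy: `φ i (some j) a k` is the fraction of stage-(a,k) traffic
that node `i` forwards to node `j`; `φ i none a k` is the fraction forwarded to `i`'s CPU. -/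
structure IsStrategy (N : SCNet V A) (φ : V → Option V → A → ℕ → ℝ) : Prop where
  nonneg : ∀ i j a k, 0 ≤ φ i j a k
  le_one : ∀ i j a k, φ i j a k ≤ 1
  no_edge : ∀ i j a k, ¬ N.E i j → φ i (some j) a k = 0
  cpu_last : ∀ i a, φ i none a (N.K a) = 0
  sum_one : ∀ i a k, k ≤ N.K a → ¬(i = N.dest a ∧ k = N.K a) →
    φ i none a k + ∑ j, φ i (some j) a k = 1
  sum_dest : ∀ a,
    φ (N.dest a) none a (N.K a) + ∑ j, φ (N.dest a) (some j) a (N.K a) = 0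

/-- A traffic vector for input rates `r` and strategy `φ`. -/
structure IsTraffic (N : SCNet V A) (r : V → A → ℝ) (φ : V → Option V → A → ℕ → ℝ)
    (t : V → A → ℕ → ℝ) : Prop where
  nonneg : ∀ i a k, 0 ≤ t i a k
  base : ∀ i a, t i a 0 = r i a + ∑ j, t j a 0 * φ j (some i) a 0
  step : ∀ i a k, 1 ≤ k → k ≤ N.K a →
    t i a k = (∑ j, t j a k * φ j (some i) a k) + t i a (k - 1) * φ i none a (k - 1)

/-- A pair (strategy, traffic) feasible for the input rates `r`. -/
def Feasible (N : SCNet V A) (r : V → A → ℝ) (φ : V → Option V → A → ℕ → ℝ)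
    (t : V → A → ℕ → ℝ) : Prop :=
  IsStrategy N φ ∧ IsTraffic N r φ t

/-- Total flow (bit/sec) on link `(i,j)`. -/
noncomputable def linkFlow (N : SCNet V A) (φ : V → Option V → A → ℕ → ℝ)
    (t : V → A → ℕ → ℝ) (i j : V) : ℝ :=
  ∑ a, ∑ k ∈ Finset.range (N.K a + 1), N.L a k * (t i a k * φ i (some j) a k)

/-- Total computation workload at node `i`. -/
noncomputable def workload (N : SCNet V A) (φ : V → Option V → A → ℕ → ℝ)
    (t : V → A → ℕ → ℝ) (i : V) : ℝ :=
  ∑ a, ∑ k ∈ Finset.range (N.K a + 1), N.w i a k * (t i a k * φ i none a k)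

/-- The aggregated communication and computation cost `T(φ,t)`. -/
noncomputable def totalCost (N : SCNet V A) (φ : V → Option V → A → ℕ → ℝ)
    (t : V → A → ℕ → ℝ) : ℝ :=
  (∑ i, ∑ j, if N.E i j then N.D i j (linkFlow N φ t i j) else 0)
    + ∑ i, N.C i (workload N φ t i)

/-- A marginal-cost vector `λ` for the pair `(φ,t)`, i.e. a solution of the
recursion defining `∂T/∂t_i(a,k)`. -/
structure IsMarginal (N : SCNet V A) (φ : V → Option V → A → ℕ → ℝ)
    (t : V → A → ℕ → ℝ) (lam : V → A → ℕ → ℝ) : Prop where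
  last : ∀ i a, lam i a (N.K a) =
    ∑ j, φ i (some j) a (N.K a) *
      (N.L a (N.K a) * N.D' i j (linkFlow N φ t i j) + lam j a (N.K a))
  step : ∀ i a k, k < N.K a →
    lam i a k =
      (∑ j, φ i (some j) a k * (N.L a k * N.D' i j (linkFlow N φ t i j) + lam j a k))
        + φ i none a k * (N.w i a k * N.C' i (workload N φ t i) + lam i a (k + 1))

/-- `j` is an admissible forwarding direction at node `i` and stage `(a,k)`:
either a physical out-neighbor, or the CPU provided `k < K a`. -/
def Admissible (N : SCNet V A) (i : V) (a : A) (k : ℕ) : Option V → Prop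
  | some j => N.E i j
  | none => k < N.K a

/-- The modified marginals `δ_{ij}(a,k)`. -/
noncomputable def mdelta (N : SCNet V A) (φ : V → Option V → A → ℕ → ℝ)
    (t : V → A → ℕ → ℝ) (lam : V → A → ℕ → ℝ) (i : V) (a : A) (k : ℕ) :
    Option V → ℝ
  | some j => N.L a k * N.D' i j (linkFlow N φ t i j) + lam j a k
  | none => N.w i a k * N.C' i (workload N φ t i) + lam i a (k + 1)

/-- The sufficient-optimality condition: every direction used at node `i` for stage
`(a,k)` achieves the minimum modified marginal over all admissible directions. -/
def SuffCond (N : SCNet V A) (φ : V → Option V → A → ℕ → ℝ)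
    (t : V → A → ℕ → ℝ) (lam : V → A → ℕ → ℝ) : Prop :=
  ∀ i a k, k ≤ N.K a → ∀ j, Admissible N i a k j → 0 < φ i j a k →
    ∀ j', Admissible N i a k j' →
      mdelta N φ t lam i a k j ≤ mdelta N φ t lam i a k j'


/-! The cost `T` is convex, so `T(φ',t') - T(φ,t)` is bounded below by the cost of `(φ',t')`
linearized at the flows of `(φ,t)`, minus that of `(φ,t)` itself. Telescoping the traffic
equations against the marginals `λ` shows that the linearized cost of any pair feasible for `r'`
is at least `∑ λ_i(a,0) r'_i(a)`, since by the sufficient-optimality condition `λ_i(a,k)` is the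
smallest modified marginal at `(i,(a,k))`; for `(φ,t)` itself there is equality. On the utility
side, concavity of `U` together with the admission conditions (the KKT conditions of
`x ↦ U(x) - λ x` on `[0, r̄]`) gives `U(r') - U(r) ≤ λ (r' - r)`. -/

open Finset

theorem ConvexOn.add_mul_sub_le_of_hasDerivWithinAt {S : Set ℝ} {f : ℝ → ℝ} {f' x y : ℝ}
    (hf : ConvexOn ℝ S f) (hx : x ∈ S) (hy : y ∈ S) (hd : HasDerivWithinAt f f' S x) :
    f x + f' * (y - x) ≤ f y := by
  rcases lt_trichotomy x y with hxy | rfl | hxy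
  · have h := hf.le_slope_of_hasDerivWithinAt hx hy hxy hd
    rw [slope_def_field, le_div_iff₀ (sub_pos.2 hxy)] at h
    linarith
  · simp
  · have h := hf.slope_le_of_hasDerivWithinAt hy hx hxy hd
    rw [slope_def_field, div_le_iff₀ (sub_pos.2 hxy)] at h
    linarith

theorem ConcaveOn.sub_le_mul_sub_of_hasDerivWithinAt_Icc {p q c f' x y : ℝ} {f : ℝ → ℝ}
    (hf : ConcaveOn ℝ (Set.Icc p q) f) (hx : x ∈ Set.Icc p q) (hy : y ∈ Set.Icc p q)
    (hd : HasDerivWithinAt f f' (Set.Icc p q) x)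
    (hlow : p < x → c ≤ f') (hup : x < q → f' ≤ c) :
    f y - f x ≤ c * (y - x) := by
  have htangent := hf.neg.add_mul_sub_le_of_hasDerivWithinAt hx hy hd.neg
  simp only [Pi.neg_apply] at htangent
  rcases lt_trichotomy y x with hyx | rfl | hyx
  · nlinarith [hlow (hy.1.trans_lt hyx)]
  · simp
  · nlinarith [hup (hyx.trans_le hy.2)]

lemma mul_le_mul_of_nonneg_of_pos_imp {α : Type*} [MulZeroClass α] [PartialOrder α]
    [PosMulMono α] {w x y : α} (hw : 0 ≤ w) (h : 0 < w → x ≤ y) :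
    w * x ≤ w * y := by
  rcases hw.eq_or_lt with rfl | hw
  · simp
  · exact mul_le_mul_of_nonneg_left (h hw) hw.le

lemma Finset.sum_sigma_sum_comm {ι κ β M : Type*} [AddCommMonoid M] (s : Finset ι)
    (t : ι → Finset κ) (u : Finset β) (f : ι → κ → β → M) :
    ∑ a ∈ s, ∑ k ∈ t a, ∑ b ∈ u, f a k b = ∑ b ∈ u, ∑ a ∈ s, ∑ k ∈ t a, f a k b := by
  rw [Finset.sum_sigma', Finset.sum_comm]
  simp_rw [Finset.sum_sigma']

namespace IsStrategy

variable {N : SCNet V A} {ψ : V → Option V → A → ℕ → ℝ}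

lemma sum_option_eq_one (hψ : IsStrategy N ψ) {i : V} {a : A} {k : ℕ} (hk : k ≤ N.K a)
    (hne : ¬(i = N.dest a ∧ k = N.K a)) : ∑ j : Option V, ψ i j a k = 1 := by
  rw [Fintype.sum_option]
  exact hψ.sum_one i a k hk hne

lemma eq_zero_at_dest (hψ : IsStrategy N ψ) (a : A) (j : Option V) :
    ψ (N.dest a) j a (N.K a) = 0 := by
  have h : ∑ j : Option V, ψ (N.dest a) j a (N.K a) = 0 := by
    rw [Fintype.sum_option]
    exact hψ.sum_dest a
  exact (sum_eq_zero_iff_of_nonneg fun j _ => hψ.nonneg _ _ _ _).1 h j (mem_univ j)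

lemma admissible_of_pos (hψ : IsStrategy N ψ) {i : V} {a : A} {k : ℕ} {j : Option V}
    (hk : k ≤ N.K a) (hpos : 0 < ψ i j a k) : Admissible N i a k j := by
  cases j with
  | none => exact hk.lt_of_ne fun h => hpos.ne' (h ▸ hψ.cpu_last i a)
  | some j => exact by_contra fun hE => hpos.ne' (hψ.no_edge i j a k hE)

lemma linkFlow_eq_zero (hψ : IsStrategy N ψ) (s : V → A → ℕ → ℝ) {i j : V} (hE : ¬ N.E i j) :
    linkFlow N ψ s i j = 0 :=
  sum_eq_zero fun a _ => sum_eq_zero fun k _ => by rw [hψ.no_edge i j a k hE, mul_zero, mul_zero]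

lemma linkFlow_nonneg (hψ : IsStrategy N ψ) {s : V → A → ℕ → ℝ} (hs : ∀ i a k, 0 ≤ s i a k)
    (i j : V) : 0 ≤ linkFlow N ψ s i j :=
  sum_nonneg fun a _ => sum_nonneg fun k hk =>
    mul_nonneg (N.hL a k (Nat.lt_succ_iff.mp (mem_range.mp hk))).le
      (mul_nonneg (hs _ _ _) (hψ.nonneg _ _ _ _))

lemma workload_nonneg (hψ : IsStrategy N ψ) {s : V → A → ℕ → ℝ} (hs : ∀ i a k, 0 ≤ s i a k)
    (i : V) : 0 ≤ workload N ψ s i :=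
  sum_nonneg fun a _ => sum_nonneg fun k hk =>
    mul_nonneg (N.hw i a k (Nat.lt_succ_iff.mp (mem_range.mp hk))).le
      (mul_nonneg (hs _ _ _) (hψ.nonneg _ _ _ _))

end IsStrategy

noncomputable def mixedDelta (N : SCNet V A) (φ : V → Option V → A → ℕ → ℝ)
    (t : V → A → ℕ → ℝ) (lam : V → A → ℕ → ℝ) (ψ : V → Option V → A → ℕ → ℝ)
    (i : V) (a : A) (k : ℕ) : ℝ :=
  ∑ j : Option V, ψ i j a k * mdelta N φ t lam i a k j

noncomputable def unitCost (N : SCNet V A) (φ : V → Option V → A → ℕ → ℝ)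
    (t : V → A → ℕ → ℝ) (i : V) (a : A) (k : ℕ) : Option V → ℝ
  | some j => N.L a k * N.D' i j (linkFlow N φ t i j)
  | none => N.w i a k * N.C' i (workload N φ t i)

def nextMarginal (lam : V → A → ℕ → ℝ) (i : V) (a : A) (k : ℕ) : Option V → ℝ
  | some j => lam j a k
  | none => lam i a (k + 1)

/-- The cost of `(ψ,s)` with every cost function replaced by its tangent at the flows of
`(φ,t)`, up to an additive constant. -/
noncomputable def linCost (N : SCNet V A) (φ : V → Option V → A → ℕ → ℝ) (t : V → A → ℕ → ℝ)
    (ψ : V → Option V → A → ℕ → ℝ) (s : V → A → ℕ → ℝ) : ℝ :=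
  (∑ i, ∑ j, N.D' i j (linkFlow N φ t i j) * linkFlow N ψ s i j)
    + ∑ i, N.C' i (workload N φ t i) * workload N ψ s i

section Marginals

variable {N : SCNet V A} {φ ψ : V → Option V → A → ℕ → ℝ} {t s : V → A → ℕ → ℝ}
  {lam : V → A → ℕ → ℝ} {ρ : V → A → ℝ}

lemma mdelta_eq_unitCost_add_nextMarginal (i : V) (a : A) (k : ℕ) (j : Option V) :
    mdelta N φ t lam i a k j = unitCost N φ t i a k j + nextMarginal lam i a k j := by
  cases j <;> rfl

lemma IsMarginal.eq_mixedDelta (hlam : IsMarginal N φ t lam) (hφ : IsStrategy N φ) {i : V}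
    {a : A} {k : ℕ} (hk : k ≤ N.K a) : lam i a k = mixedDelta N φ t lam φ i a k := by
  rw [mixedDelta, Fintype.sum_option]
  rcases hk.lt_or_eq with hk | rfl
  · rw [hlam.step i a k hk, add_comm]
    rfl
  · rw [hlam.last i a, hφ.cpu_last, zero_mul, zero_add]
    rfl

lemma IsMarginal.le_mdelta (hlam : IsMarginal N φ t lam) (hφ : IsStrategy N φ)
    (hsuff : SuffCond N φ t lam) {i : V} {a : A} {k : ℕ} (hk : k ≤ N.K a)
    (hne : ¬(i = N.dest a ∧ k = N.K a)) {j' : Option V} (hj' : Admissible N i a k j') :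
    lam i a k ≤ mdelta N φ t lam i a k j' :=
  calc lam i a k = ∑ j, φ i j a k * mdelta N φ t lam i a k j := hlam.eq_mixedDelta hφ hk
    _ ≤ ∑ j, φ i j a k * mdelta N φ t lam i a k j' := sum_le_sum fun j _ =>
        mul_le_mul_of_nonneg_of_pos_imp (hφ.nonneg i j a k)
          fun h => hsuff i a k hk j (hφ.admissible_of_pos hk h) h j' hj'
    _ = mdelta N φ t lam i a k j' := by rw [← sum_mul, hφ.sum_option_eq_one hk hne, one_mul]

lemma IsMarginal.le_mixedDelta (hlam : IsMarginal N φ t lam) (hφ : IsStrategy N φ)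
    (hsuff : SuffCond N φ t lam) (hψ : IsStrategy N ψ) {i : V} {a : A} {k : ℕ}
    (hk : k ≤ N.K a) : lam i a k ≤ mixedDelta N φ t lam ψ i a k := by
  by_cases hne : i = N.dest a ∧ k = N.K a
  · obtain ⟨rfl, rfl⟩ := hne
    simp [hlam.eq_mixedDelta hφ le_rfl, mixedDelta, hφ.eq_zero_at_dest, hψ.eq_zero_at_dest]
  · calc lam i a k = ∑ j, ψ i j a k * lam i a k := by
          rw [← sum_mul, hψ.sum_option_eq_one hk hne, one_mul]
      _ ≤ mixedDelta N φ t lam ψ i a k := sum_le_sum fun j _ =>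
          mul_le_mul_of_nonneg_of_pos_imp (hψ.nonneg i j a k)
            fun h => hlam.le_mdelta hφ hsuff hk hne (hψ.admissible_of_pos hk h)

lemma linCost_eq_sum_stages (φ : V → Option V → A → ℕ → ℝ) (t : V → A → ℕ → ℝ)
    (ψ : V → Option V → A → ℕ → ℝ) (s : V → A → ℕ → ℝ) :
    linCost N φ t ψ s = ∑ a, ∑ k ∈ range (N.K a + 1), ∑ i,
      s i a k * ∑ j, ψ i j a k * unitCost N φ t i a k j := by
  generalize linkFlow N φ t = F
  generalize workload N φ t = G
  simp only [linCost, linkFlow, workload, Fintype.sum_option, unitCost, mul_add, mul_sum,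
    sum_add_distrib]
  rw [add_comm]
  symm
  congr 1
  · rw [sum_sigma_sum_comm]
    exact sum_congr rfl fun i _ => sum_congr rfl fun a _ => sum_congr rfl fun k _ => by ring
  · rw [sum_sigma_sum_comm]
    refine sum_congr rfl fun i _ => ?_
    rw [sum_sigma_sum_comm]
    exact sum_congr rfl fun j _ => sum_congr rfl fun a _ => sum_congr rfl fun k _ => by ring

lemma IsTraffic.sum_marginal_mul (hs : IsTraffic N ρ ψ s) (hψ : IsStrategy N ψ)
    (lam : V → A → ℕ → ℝ) (a : A) :
    ∑ k ∈ range (N.K a + 1), ∑ i, lam i a k * s i a k =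
      ∑ i, lam i a 0 * ρ i a
        + ∑ k ∈ range (N.K a + 1), ∑ i, s i a k * ∑ j, ψ i j a k * nextMarginal lam i a k j := by
  set inflow := fun k => ∑ i, lam i a k * ∑ j, s j a k * ψ j (some i) a k
  set toCpu := fun k => ∑ i, lam i a (k + 1) * (s i a k * ψ i none a k)
  have hstage : ∀ k, ∑ i, s i a k * ∑ j, ψ i j a k * nextMarginal lam i a k j
      = inflow k + toCpu k := by
    intro k
    simp only [inflow, toCpu, Fintype.sum_option, nextMarginal, mul_add, mul_sum,
      sum_add_distrib]
    rw [add_comm, sum_comm]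
    congr 1
    · exact sum_congr rfl fun i _ => sum_congr rfl fun j _ => by ring
    · exact sum_congr rfl fun i _ => by ring
  have hfirst : ∑ i, lam i a 0 * s i a 0 = ∑ i, lam i a 0 * ρ i a + inflow 0 := by
    rw [← sum_add_distrib]
    exact sum_congr rfl fun i _ => by rw [hs.base i a, mul_add]
  have hnext : ∀ k ∈ range (N.K a), ∑ i, lam i a (k + 1) * s i a (k + 1)
      = inflow (k + 1) + toCpu k := by
    intro k hk
    rw [← sum_add_distrib]
    refine sum_congr rfl fun i _ => ?_
    rw [hs.step i a (k + 1) k.succ_pos (mem_range.1 hk), Nat.add_sub_cancel, mul_add]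
  have hlast : toCpu (N.K a) = 0 := by simp [toCpu, hψ.cpu_last]
  simp only [hstage, sum_add_distrib]
  rw [sum_range_succ', sum_range_succ' inflow, sum_range_succ toCpu, hlast,
    sum_congr rfl hnext, sum_add_distrib, hfirst]
  ring

lemma linCost_eq_sum_marginal_mul_rate_add (hψ : IsStrategy N ψ) (hs : IsTraffic N ρ ψ s)
    (φ : V → Option V → A → ℕ → ℝ) (t lam : V → A → ℕ → ℝ) :
    linCost N φ t ψ s = ∑ i, ∑ a, lam i a 0 * ρ i a
      + ∑ a, ∑ k ∈ range (N.K a + 1), ∑ i,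
          s i a k * (mixedDelta N φ t lam ψ i a k - lam i a k) := by
  rw [linCost_eq_sum_stages, sum_comm, ← sum_add_distrib]
  refine sum_congr rfl fun a _ => ?_
  have htelescope := hs.sum_marginal_mul hψ lam a
  simp only [mixedDelta, mdelta_eq_unitCost_add_nextMarginal, mul_add, mul_sub, sum_add_distrib,
    sum_sub_distrib, mul_comm (s _ _ _) (lam _ _ _)]
  linarith

lemma sum_marginal_mul_rate_le_linCost (hφ : IsStrategy N φ) (hlam : IsMarginal N φ t lam)
    (hsuff : SuffCond N φ t lam) (hψ : IsStrategy N ψ) (hs : IsTraffic N ρ ψ s) :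
    ∑ i, ∑ a, lam i a 0 * ρ i a ≤ linCost N φ t ψ s := by
  rw [linCost_eq_sum_marginal_mul_rate_add hψ hs φ t lam]
  refine le_add_of_nonneg_right (sum_nonneg fun a _ => sum_nonneg fun k hk => sum_nonneg
    fun i _ => mul_nonneg (hs.nonneg i a k) (sub_nonneg.2 ?_))
  exact hlam.le_mixedDelta hφ hsuff hψ (Nat.lt_succ_iff.1 (mem_range.1 hk))

lemma sum_marginal_mul_rate_eq_linCost (hφ : IsStrategy N φ) (hlam : IsMarginal N φ t lam)
    (ht : IsTraffic N ρ φ t) : ∑ i, ∑ a, lam i a 0 * ρ i a = linCost N φ t φ t := by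
  rw [linCost_eq_sum_marginal_mul_rate_add hφ ht φ t lam, left_eq_add]
  refine sum_eq_zero fun a _ => sum_eq_zero fun k hk => sum_eq_zero fun i _ => ?_
  rw [← hlam.eq_mixedDelta hφ (Nat.lt_succ_iff.1 (mem_range.1 hk)), sub_self, mul_zero]

lemma totalCost_add_linCost_sub_le (hφ : IsStrategy N φ) (ht : ∀ i a k, 0 ≤ t i a k)
    (hψ : IsStrategy N ψ) (hs : ∀ i a k, 0 ≤ s i a k) :
    totalCost N φ t + (linCost N φ t ψ s - linCost N φ t φ t) ≤ totalCost N ψ s := by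
  have hlink : ∀ i j, (if N.E i j then N.D i j (linkFlow N φ t i j) else 0)
      + N.D' i j (linkFlow N φ t i j) * (linkFlow N ψ s i j - linkFlow N φ t i j)
      ≤ if N.E i j then N.D i j (linkFlow N ψ s i j) else 0 := by
    intro i j
    by_cases hE : N.E i j
    · simp only [if_pos hE]
      have hF := hφ.linkFlow_nonneg ht i j
      exact (N.hD_conv i j hE).add_mul_sub_le_of_hasDerivWithinAt hF
        (hψ.linkFlow_nonneg hs i j) (N.hD_deriv i j hE _ hF)
    · simp [hE, hφ.linkFlow_eq_zero, hψ.linkFlow_eq_zero]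
  have hnode : ∀ i, N.C i (workload N φ t i)
      + N.C' i (workload N φ t i) * (workload N ψ s i - workload N φ t i)
      ≤ N.C i (workload N ψ s i) := fun i =>
    (N.hC_conv i).add_mul_sub_le_of_hasDerivWithinAt (hφ.workload_nonneg ht i)
      (hψ.workload_nonneg hs i) (N.hC_deriv i _ (hφ.workload_nonneg ht i))
  have hsum := add_le_add
    (sum_le_sum fun i (_ : i ∈ univ) => sum_le_sum fun j (_ : j ∈ univ) => hlink i j)
    (sum_le_sum fun i (_ : i ∈ univ) => hnode i)
  simp only [totalCost, linCost, sum_add_distrib, mul_sub, sum_sub_distrib] at hsum ⊢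
  linarith

end Marginals

theorem sufficient_optimality_congestion_control_general
    (N : SCNet V A)
    (rbar : V → A → ℝ)
    (U U' : V → A → ℝ → ℝ)
    (hU_conc : ∀ i a, ConcaveOn ℝ (Set.Icc 0 (rbar i a)) (U i a))
    (hU_deriv : ∀ i a, ∀ x ∈ Set.Icc 0 (rbar i a),
      HasDerivWithinAt (U i a) (U' i a x) (Set.Icc 0 (rbar i a)) x)
    (r : V → A → ℝ) (hadm : ∀ i a, r i a ∈ Set.Icc 0 (rbar i a))
    (φ : V → Option V → A → ℕ → ℝ) (t : V → A → ℕ → ℝ) (lam : V → A → ℕ → ℝ)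
    (hfeas : Feasible N r φ t) (hlam : IsMarginal N φ t lam)
    (hsuff : SuffCond N φ t lam)
    (hcc : ∀ i a, 0 < rbar i a →
      (0 < r i a → lam i a 0 ≤ U' i a (r i a))
      ∧ (r i a < rbar i a → U' i a (r i a) ≤ lam i a 0)) :
    ∀ (r' : V → A → ℝ) (φ' : V → Option V → A → ℕ → ℝ) (t' : V → A → ℕ → ℝ),
      (∀ i a, r' i a ∈ Set.Icc 0 (rbar i a)) → Feasible N r' φ' t' →
      (∑ i, ∑ a, U i a (r' i a)) - totalCost N φ' t'
        ≤ (∑ i, ∑ a, U i a (r i a)) - totalCost N φ t := by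
  rintro r' φ' t' hadm' ⟨hφ', ht'⟩
  obtain ⟨hφ, ht⟩ := hfeas
  have hutility : ∀ i a, U i a (r' i a) - U i a (r i a) ≤ lam i a 0 * (r' i a - r i a) :=
    fun i a => (hU_conc i a).sub_le_mul_sub_of_hasDerivWithinAt_Icc (hadm i a) (hadm' i a)
      (hU_deriv i a _ (hadm i a)) (fun h => (hcc i a (h.trans_le (hadm i a).2)).1 h)
      (fun h => (hcc i a ((hadm i a).1.trans_lt h)).2 h)
  have hsum := sum_le_sum fun i (_ : i ∈ univ) => sum_le_sum fun a (_ : a ∈ univ) => hutility i a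
  simp only [mul_sub, sum_sub_distrib] at hsum
  have hcost := totalCost_add_linCost_sub_le hφ ht.nonneg hφ' ht'.nonneg
  have hinput' := sum_marginal_mul_rate_le_linCost hφ hlam hsuff hφ' ht'
  have hinput := sum_marginal_mul_rate_eq_linCost hφ hlam ht
  linarith

/-- **Theorem 5 (Sufficient optimality condition with congestion control).** With
upper input limits `r̄` and concave nondecreasing continuously differentiable
utilities `U` vanishing at `0`, if an admitted rate `r` together with a pair `(φ,t)`
feasible for `r` admits a marginal vector satisfying the sufficient-optimality
condition, and moreover the admission marginals satisfy
`λ_i(a,0) ≤ U'_{ia}(r_i(a))` whenever `r_i(a) > 0` and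
`λ_i(a,0) ≥ U'_{ia}(r_i(a))` whenever `r_i(a) < r̄_i(a)`, then `(r,φ,t)` maximizes
the utility-minus-cost `W` over all admitted rates and feasible pairs. -/
theorem sufficient_optimality_congestion_control
    (N : SCNet V A)
    (rbar : V → A → ℝ) (hrbar : ∀ i a, 0 ≤ rbar i a)
    (U U' : V → A → ℝ → ℝ)
    (hU_mono : ∀ i a, MonotoneOn (U i a) (Set.Icc 0 (rbar i a)))
    (hU_conc : ∀ i a, ConcaveOn ℝ (Set.Icc 0 (rbar i a)) (U i a))
    (hU_deriv : ∀ i a, ∀ x ∈ Set.Icc 0 (rbar i a),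
      HasDerivWithinAt (U i a) (U' i a x) (Set.Icc 0 (rbar i a)) x)
    (hU'_cont : ∀ i a, ContinuousOn (U' i a) (Set.Icc 0 (rbar i a)))
    (hU_zero : ∀ i a, U i a 0 = 0)
    (r : V → A → ℝ) (hadm : ∀ i a, r i a ∈ Set.Icc 0 (rbar i a))
    (φ : V → Option V → A → ℕ → ℝ) (t : V → A → ℕ → ℝ) (lam : V → A → ℕ → ℝ)
    (hfeas : Feasible N r φ t) (hlam : IsMarginal N φ t lam)
    (hsuff : SuffCond N φ t lam)
    (hcc : ∀ i a, 0 < rbar i a →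
      (0 < r i a → lam i a 0 ≤ U' i a (r i a))
      ∧ (r i a < rbar i a → U' i a (r i a) ≤ lam i a 0)) :
    ∀ (r' : V → A → ℝ) (φ' : V → Option V → A → ℕ → ℝ) (t' : V → A → ℕ → ℝ),
      (∀ i a, r' i a ∈ Set.Icc 0 (rbar i a)) → Feasible N r' φ' t' →
      (∑ i, ∑ a, U i a (r' i a)) - totalCost N φ' t'
        ≤ (∑ i, ∑ a, U i a (r i a)) - totalCost N φ t :=
  sufficient_optimality_congestion_control_general N rbar U U' hU_conc hU_deriv r hadm φ t lam hfeas
    hlam hsuff hcc
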